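/- arXiv:1904.09251 — 4 statements merged into one kernel-verified Lean document; each statement's English description precedes it below -/
import Mathlib

section
/- (Explicit autonomous right-invariant error vector field.) Fix ω, a, g ∈ ℝ³ and let F be the contact-inertial dynamics. Then for every 3×3 real matrix E_R and vectors E_v, E_p, E_d ∈ ℝ³, with E := S(E_R, E_v, E_p, E_d), the error vector field g_u(E) := F(E) − E * F(I₆) equals the 6×6 matrix whose top three rows consist of the blocks (0₃ₓ₃, (I₃ − E_R) g, E_v, 0₃ₓ₁) and whose bottom three rows are zero. In particular g_u(E) depends only on the error E and not on the state trajectory. -/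
open Matrix

/-- The skew-symmetric (hat) matrix of a vector `φ ∈ ℝ³`, so that `skew φ *ᵥ x = φ × x`. -/
noncomputable def skew (φ : Fin 3 → ℝ) : Matrix (Fin 3) (Fin 3) ℝ :=
  !![0, -φ 2, φ 1; φ 2, 0, -φ 0; -φ 1, φ 0, 0]

/-- `S R v p d` is the 6×6 matrix with top-left 3×3 block `R`, whose 4th, 5th, 6th columns
have top three entries `v`, `p`, `d` respectively, bottom-right 3×3 block the identity, and
all remaining entries zero (an element of `SE₃(3)`). -/
noncomputable def S (R : Matrix (Fin 3) (Fin 3) ℝ) (v p d : Fin 3 → ℝ) :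
    Matrix (Fin 6) (Fin 6) ℝ := fun i j =>
  if hi : (i : ℕ) < 3 then
    if hj : (j : ℕ) < 3 then R ⟨i, hi⟩ ⟨j, hj⟩
    else if (j : ℕ) = 3 then v ⟨i, hi⟩
    else if (j : ℕ) = 4 then p ⟨i, hi⟩
    else d ⟨i, hi⟩
  else if (i : ℕ) = (j : ℕ) then 1 else 0

/-- `T M x y z` is the 6×6 matrix whose top three rows consist of the blocks
`(M, x, y, z)` and whose bottom three rows are zero. -/
noncomputable def T (M : Matrix (Fin 3) (Fin 3) ℝ) (x y z : Fin 3 → ℝ) :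
    Matrix (Fin 6) (Fin 6) ℝ := fun i j =>
  if hi : (i : ℕ) < 3 then
    if hj : (j : ℕ) < 3 then M ⟨i, hi⟩ ⟨j, hj⟩
    else if (j : ℕ) = 3 then x ⟨i, hi⟩
    else if (j : ℕ) = 4 then y ⟨i, hi⟩
    else z ⟨i, hi⟩
  else 0

/-- The top-left 3×3 block of a 6×6 matrix. -/
noncomputable def Rblk (X : Matrix (Fin 6) (Fin 6) ℝ) : Matrix (Fin 3) (Fin 3) ℝ :=
  fun i j => X (Fin.castLE (by norm_num) i) (Fin.castLE (by norm_num) j)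

/-- The top three entries of the 4th column of a 6×6 matrix (the `v` block). -/
noncomputable def vblk (X : Matrix (Fin 6) (Fin 6) ℝ) : Fin 3 → ℝ :=
  fun i => X (Fin.castLE (by norm_num) i) (3 : Fin 6)

/-- The deterministic contact-inertial dynamics: on a state `S R v p d` it returns the 6×6
matrix whose top three rows consist of the blocks `(R ω̂, R a + g, v, 0)` and whose bottom
three rows are zero. -/
noncomputable def F (ω a g : Fin 3 → ℝ) (X : Matrix (Fin 6) (Fin 6) ℝ) :
    Matrix (Fin 6) (Fin 6) ℝ :=
  T (Rblk X * skew ω) (Rblk X *ᵥ a + g) (vblk X) 0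


lemma Rblk_S (R : Matrix (Fin 3) (Fin 3) ℝ) (v p d : Fin 3 → ℝ) :
    Rblk (S R v p d) = R := by
  ext i j; fin_cases i <;> fin_cases j <;> rfl

lemma vblk_S (R : Matrix (Fin 3) (Fin 3) ℝ) (v p d : Fin 3 → ℝ) :
    vblk (S R v p d) = v := by
  ext i; fin_cases i <;> rfl

lemma Rblk_one : Rblk (1 : Matrix (Fin 6) (Fin 6) ℝ) = 1 := by
  ext i j; fin_cases i <;> fin_cases j <;>
    norm_num [Rblk, Matrix.one_apply, Fin.castLE] <;> first | rfl | decide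

lemma vblk_one : vblk (1 : Matrix (Fin 6) (Fin 6) ℝ) = 0 := by
  ext i; fin_cases i <;> norm_num [vblk, Matrix.one_apply, Fin.castLE] <;> first | rfl | decide

lemma S_mul_T (R : Matrix (Fin 3) (Fin 3) ℝ) (v p d : Fin 3 → ℝ)
    (M : Matrix (Fin 3) (Fin 3) ℝ) (x y z : Fin 3 → ℝ) :
    S R v p d * T M x y z = T (R * M) (R *ᵥ x) (R *ᵥ y) (R *ᵥ z) := by
  ext i j
  rw [Matrix.mul_apply, Fin.sum_univ_six]
  fin_cases i <;> fin_cases j <;>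
    norm_num [S, T, show ((3:Fin 6):ℕ)=3 from rfl, show ((4:Fin 6):ℕ)=4 from rfl,
      show ((5:Fin 6):ℕ)=5 from rfl, Matrix.mul_apply, Matrix.mulVec, dotProduct,
      Fin.sum_univ_three] <;> rfl

lemma T_sub_T (M M' : Matrix (Fin 3) (Fin 3) ℝ) (x y z x' y' z' : Fin 3 → ℝ) :
    T M x y z - T M' x' y' z' = T (M - M') (x - x') (y - y') (z - z') := by
  ext i j
  by_cases hi : (i : ℕ) < 3 <;> simp [T, hi] <;>
    split_ifs <;> simp

/-- **Explicit autonomous right-invariant error vector field.**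
The error vector field `g_u(E) := F(E) - E * F(I₆)` for `E = S(E_R, E_v, E_p, E_d)` equals
the matrix with top row blocks `(0, (I₃ - E_R) g, E_v, 0)` and zero bottom rows; in
particular it depends only on the error `E`. -/
theorem right_invariant_error_vector_field_explicit
    (ω a g : Fin 3 → ℝ)
    (ER : Matrix (Fin 3) (Fin 3) ℝ) (Ev Ep Ed : Fin 3 → ℝ) :
    F ω a g (S ER Ev Ep Ed) - S ER Ev Ep Ed * F ω a g 1 =
      T 0 ((1 - ER) *ᵥ g) Ev 0 := by
  unfold F
  rw [Rblk_S, vblk_S, Rblk_one, vblk_one, Matrix.one_mul, Matrix.one_mulVec,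
    S_mul_T, T_sub_T]
  congr 1 <;> simp [Matrix.mulVec_add, Matrix.sub_mulVec, Matrix.one_mulVec] <;> abel
end

section
/- (Unobservability of rotation about the gravity vector.) Fix g ∈ ℝ³. Let A be the 12×12 real matrix, written in 3×3 blocks indexed 1..4, whose only nonzero blocks are A₂₁ = ĝ and A₃₂ = I₃, and let H be the 3×12 matrix with blocks (0₃, 0₃, −I₃, I₃). Then for every t ∈ ℝ and every α ∈ ℝ, H * exp_m(A t) * u = 0, where u ∈ ℝ¹² is the vector with block components (α g, 0, 0, 0). Hence orientation error in the direction of the gravity vector (yaw) lies in the kernel of every row block of the observability matrix. -/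
/-! The vector `u = (α g, 0, 0, 0)` lies in the kernel of `A`: its only nonzero image block is
`ĝ (α g) = α (g × g) = 0`. Hence every term of the exponential series beyond the first kills
`u`, so `exp_m(A t) u = u`, and `H u = 0` because the last two blocks of `u` vanish. -/

open Matrix

/-- Assemble a 12×12 matrix from a 4×4 array of 3×3 blocks. -/
noncomputable def B4 (M : Fin 4 → Fin 4 → Matrix (Fin 3) (Fin 3) ℝ) :
    Matrix (Fin 12) (Fin 12) ℝ := fun i j =>
  M ⟨(i : ℕ) / 3, by have := i.isLt; omega⟩ ⟨(j : ℕ) / 3, by have := j.isLt; omega⟩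
    ⟨(i : ℕ) % 3, by omega⟩ ⟨(j : ℕ) % 3, by omega⟩

/-- The linearized right-invariant error dynamics matrix: the 12×12 block matrix whose only
nonzero blocks are `A₂₁ = ĝ` and `A₃₂ = I₃`. -/
noncomputable def A12 (g : Fin 3 → ℝ) : Matrix (Fin 12) (Fin 12) ℝ :=
  B4 ![![0, 0, 0, 0], ![skew g, 0, 0, 0], ![0, 1, 0, 0], ![0, 0, 0, 0]]

/-- The forward-kinematics observation matrix: the 3×12 matrix with 3×3 blocks
`(0, 0, -I₃, I₃)`. -/
noncomputable def H312 : Matrix (Fin 3) (Fin 12) ℝ := fun i j =>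
  (![0, 0, -1, 1] : Fin 4 → Matrix (Fin 3) (Fin 3) ℝ)
    ⟨(j : ℕ) / 3, by have := j.isLt; omega⟩ i ⟨(j : ℕ) % 3, by omega⟩

/-- Assemble a vector in `ℝ¹²` from four block components in `ℝ³`. -/
noncomputable def vec4 (x : Fin 4 → Fin 3 → ℝ) : Fin 12 → ℝ := fun j =>
  x ⟨(j : ℕ) / 3, by have := j.isLt; omega⟩ ⟨(j : ℕ) % 3, by omega⟩
namespace Matrix

variable {m 𝕂 : Type*} [Fintype m] [DecidableEq m] [RCLike 𝕂]

open scoped Nat Norms.Operator in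
theorem exp_mulVec_of_mulVec_eq_zero {M : Matrix m m 𝕂} {u : m → 𝕂} (h : M *ᵥ u = 0) :
    NormedSpace.exp M *ᵥ u = u := by
  have hpow (k : ℕ) : M ^ (k + 1) *ᵥ u = 0 := by
    rw [pow_succ, ← mulVec_mulVec, h, mulVec_zero]
  have hsum : HasSum (fun k => ((k ! : 𝕂)⁻¹ • M ^ k) *ᵥ u) (NormedSpace.exp M *ᵥ u) :=
    (NormedSpace.exp_series_hasSum_exp' M).map (mulVec.addMonoidHomLeft u)
      (continuous_id.matrix_mulVec continuous_const)
  refine hsum.unique (hasSum_single 0 fun k hk => ?_) |>.trans (by simp)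
  obtain ⟨k, rfl⟩ := Nat.exists_eq_succ_of_ne_zero hk
  rw [smul_mulVec, hpow, smul_zero]

end Matrix

theorem Fin.sum_univ_divNat_modNat {M : Type*} [AddCommMonoid M] {m n : ℕ}
    (f : Fin m → Fin n → M) : ∑ k : Fin (m * n), f k.divNat k.modNat = ∑ c, ∑ r, f c r := by
  rw [← Fintype.sum_prod_type']
  exact finProdFinEquiv.symm.sum_comp fun p => f p.1 p.2

theorem skew_mulVec (φ x : Fin 3 → ℝ) : skew φ *ᵥ x = φ ⨯₃ x := by
  ext i
  fin_cases i <;> simp [skew, cross_apply, mulVec, dotProduct, Fin.sum_univ_three] <;> ring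

theorem vec4_zero : vec4 0 = 0 := rfl

theorem B4_mulVec_vec4 (M : Fin 4 → Fin 4 → Matrix (Fin 3) (Fin 3) ℝ) (x : Fin 4 → Fin 3 → ℝ) :
    B4 M *ᵥ vec4 x = vec4 fun b => ∑ c, M b c *ᵥ x c := by
  ext (j : Fin (4 * 3))
  refine (Fin.sum_univ_divNat_modNat fun c r => M j.divNat c j.modNat r * x c r).trans ?_
  simp only [vec4, mulVec, dotProduct, Finset.sum_apply]
  rfl

theorem A12_mulVec_vec4 (g : Fin 3 → ℝ) (x : Fin 4 → Fin 3 → ℝ) :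
    A12 g *ᵥ vec4 x = vec4 ![0, skew g *ᵥ x 0, x 1, 0] := by
  rw [A12, B4_mulVec_vec4]
  congr 1
  ext b : 1
  fin_cases b <;> simp [Fin.sum_univ_four]

theorem H312_mulVec_vec4 (x : Fin 4 → Fin 3 → ℝ) : H312 *ᵥ vec4 x = x 3 - x 2 := by
  ext i
  refine (Fin.sum_univ_divNat_modNat (m := 4) fun c r =>
    (![0, 0, -1, 1] : Fin 4 → Matrix (Fin 3) (Fin 3) ℝ) c i r * x c r).trans ?_
  change ∑ c, ((![0, 0, -1, 1] : Fin 4 → Matrix (Fin 3) (Fin 3) ℝ) c *ᵥ x c) i = _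
  simp only [Fin.sum_univ_four, cons_val, zero_mulVec, neg_mulVec, one_mulVec, Pi.zero_apply,
    Pi.neg_apply, Pi.sub_apply]
  ring

/-- **Unobservability of rotation about the gravity vector (yaw).** Orientation error in
the direction of the gravity vector lies in the kernel of every row block
`H exp_m(A t)` of the observability matrix. -/
theorem yaw_unobservable (g : Fin 3 → ℝ) (t : ℝ) (α : ℝ) :
    H312 *ᵥ (NormedSpace.exp (t • A12 g) *ᵥ vec4 ![α • g, 0, 0, 0]) = 0 := by
  have hg : skew g *ᵥ (α • g) = 0 := by
    rw [mulVec_smul, skew_mulVec, cross_self, smul_zero]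
  have hker : (t • A12 g) *ᵥ vec4 ![α • g, 0, 0, 0] = 0 := by
    rw [smul_mulVec, A12_mulVec_vec4]
    simp [hg, ← zero_empty, cons_zero_zero, vec4_zero]
  rw [exp_mulVec_of_mulVec_eq_zero hker, H312_mulVec_vec4]
  simp
end

section
/- (Closed form of the left Jacobian Γ₁ of SO(3).) For every nonzero φ ∈ ℝ³, the matrix series Γ₁(φ) := Σ_{n=0}^∞ (1/(n+1)!) φ̂ⁿ converges and equals I₃ + ((1 − cos‖φ‖) / ‖φ‖²) φ̂ + ((‖φ‖ − sin‖φ‖) / ‖φ‖³) φ̂², where ‖φ‖ is the Euclidean norm of φ. -/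
open Matrix

/-- The Euclidean norm of a vector in `ℝ³`. -/
noncomputable def enorm3 (φ : Fin 3 → ℝ) : ℝ :=
  Real.sqrt (∑ i, φ i ^ 2)

/-!
Since `φ̂³ = -‖φ‖² φ̂`, every power `φ̂ⁿ` with `n ≥ 1` is a scalar multiple of `φ̂` (odd `n`) or of
`φ̂²` (even `n`), so the series splits into `I₃` plus two scalar series times `φ̂` and `φ̂²`.
Those scalar series are the tails of the Taylor series of `cos` and `sin`, rescaled by `-‖φ‖²`
and `-‖φ‖³`.
-/

section CubicRelation

variable {R A : Type*} [CommSemiring R] [Semiring A] [Algebra R A] {M : A} {c : R}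

theorem pow_two_mul_add_one_of_pow_three_eq_smul (hM : M ^ 3 = c • M) (k : ℕ) :
    M ^ (2 * k + 1) = c ^ k • M := by
  induction k with
  | zero => simp
  | succ k ih =>
    rw [show 2 * (k + 1) + 1 = 2 + (2 * k + 1) by ring, pow_add, ih, mul_smul_comm,
      ← pow_succ, hM, smul_smul, ← pow_succ]

theorem pow_two_mul_add_two_of_pow_three_eq_smul (hM : M ^ 3 = c • M) (k : ℕ) :
    M ^ (2 * k + 2) = c ^ k • M ^ 2 := by
  rw [pow_succ, pow_two_mul_add_one_of_pow_three_eq_smul hM, smul_mul_assoc, ← pow_two]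

theorem hasSum_smul_pow_of_pow_three_eq_smul [TopologicalSpace R] [TopologicalSpace A]
    [ContinuousAdd A] [ContinuousSMul R A] (hM : M ^ 3 = c • M) {a : ℕ → R} {s₁ s₂ : R}
    (hodd : HasSum (fun k ↦ a (2 * k + 1) * c ^ k) s₁)
    (heven : HasSum (fun k ↦ a (2 * k + 2) * c ^ k) s₂) :
    HasSum (fun n ↦ a n • M ^ n) (a 0 • 1 + (s₁ • M + s₂ • M ^ 2)) := by
  have hodd' : HasSum (fun k ↦ a (2 * k + 1) • M ^ (2 * k + 1)) (s₁ • M) :=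
    (hodd.smul_const M).congr_fun fun k ↦ by
      rw [pow_two_mul_add_one_of_pow_three_eq_smul hM, smul_smul]
  have heven' : HasSum (fun k ↦ a (2 * k + 1 + 1) • M ^ (2 * k + 1 + 1)) (s₂ • M ^ 2) :=
    (heven.smul_const (M ^ 2)).congr_fun fun k ↦ by
      rw [pow_two_mul_add_two_of_pow_three_eq_smul hM, smul_smul]
  have htail := HasSum.even_add_odd (f := fun n ↦ a (n + 1) • M ^ (n + 1)) hodd' heven'
  have hsum := HasSum.zero_add (f := fun n ↦ a n • M ^ n) htail
  rwa [pow_zero] at hsum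

end CubicRelation

theorem Real.hasSum_one_sub_cos_div_sq {θ : ℝ} (hθ : θ ≠ 0) :
    HasSum (fun k ↦ ((2 * k + 2).factorial : ℝ)⁻¹ * (-θ ^ 2) ^ k) ((1 - cos θ) / θ ^ 2) := by
  have htail : HasSum (fun n ↦ (-1) ^ (n + 1) * θ ^ (2 * (n + 1)) / (2 * (n + 1)).factorial)
      (cos θ - 1) := by
    simpa using (hasSum_nat_add_iff' 1).2 (Real.hasSum_cos θ)
  rw [show (1 - cos θ) / θ ^ 2 = (cos θ - 1) / -θ ^ 2 by field_simp; ring]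
  refine (htail.div_const (-θ ^ 2)).congr_fun fun k ↦ ?_
  rw [show 2 * (k + 1) = 2 * k + 2 by ring, neg_pow, ← pow_mul]
  field_simp
  ring

theorem Real.hasSum_sub_sin_div_cube {θ : ℝ} (hθ : θ ≠ 0) :
    HasSum (fun k ↦ ((2 * k + 3).factorial : ℝ)⁻¹ * (-θ ^ 2) ^ k) ((θ - sin θ) / θ ^ 3) := by
  have htail : HasSum
      (fun n ↦ (-1) ^ (n + 1) * θ ^ (2 * (n + 1) + 1) / (2 * (n + 1) + 1).factorial)
      (sin θ - θ) := by
    simpa using (hasSum_nat_add_iff' 1).2 (Real.hasSum_sin θ)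
  rw [show (θ - sin θ) / θ ^ 3 = (sin θ - θ) / -θ ^ 3 by field_simp; ring]
  refine (htail.div_const (-θ ^ 3)).congr_fun fun k ↦ ?_
  rw [show 2 * (k + 1) + 1 = 2 * k + 3 by ring, neg_pow, ← pow_mul]
  field_simp
  ring

theorem enorm3_sq (φ : Fin 3 → ℝ) : enorm3 φ ^ 2 = ∑ i, φ i ^ 2 :=
  Real.sq_sqrt (Finset.sum_nonneg fun i _ ↦ sq_nonneg (φ i))

theorem enorm3_ne_zero {φ : Fin 3 → ℝ} (hφ : φ ≠ 0) : enorm3 φ ≠ 0 := by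
  obtain ⟨i, hi⟩ := Function.ne_iff.mp hφ
  refine (Real.sqrt_pos.2 ?_).ne'
  exact Finset.sum_pos' (fun j _ ↦ sq_nonneg (φ j)) ⟨i, Finset.mem_univ i, sq_pos_of_ne_zero hi⟩

theorem skew_pow_three (φ : Fin 3 → ℝ) : skew φ ^ 3 = (-enorm3 φ ^ 2) • skew φ := by
  rw [enorm3_sq, Fin.sum_univ_three, pow_succ, pow_two, skew, mul_fin_three, mul_fin_three,
    smul_of]
  simp only [smul_cons, smul_empty, smul_eq_mul, EmbeddingLike.apply_eq_iff_eq, vecCons_inj,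
    and_true]
  refine ⟨⟨?_, ?_, ?_⟩, ⟨?_, ?_, ?_⟩, ?_, ?_, ?_⟩ <;> ring

/-- **Closed form of the left Jacobian `Γ₁` of SO(3)**: for nonzero `φ ∈ ℝ³`, the series
`Γ₁(φ) = Σ_{n=0}^∞ (1/(n+1)!) φ̂ⁿ` converges, with sum
`I₃ + ((1 − cos‖φ‖)/‖φ‖²) φ̂ + ((‖φ‖ − sin‖φ‖)/‖φ‖³) φ̂²`. -/
theorem left_jacobian_closed_form (φ : Fin 3 → ℝ) (hφ : φ ≠ 0) :
    HasSum (fun n : ℕ => (((n + 1).factorial : ℝ))⁻¹ • skew φ ^ n)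
      (1 + ((1 - Real.cos (enorm3 φ)) / enorm3 φ ^ 2) • skew φ
        + ((enorm3 φ - Real.sin (enorm3 φ)) / enorm3 φ ^ 3) • skew φ ^ 2) := by
  have hθ := enorm3_ne_zero hφ
  have h := hasSum_smul_pow_of_pow_three_eq_smul (skew_pow_three φ)
    (a := fun n ↦ ((n + 1).factorial : ℝ)⁻¹) (Real.hasSum_one_sub_cos_div_sq hθ)
    (Real.hasSum_sub_sin_div_cube hθ)
  rwa [Nat.factorial_one, Nat.cast_one, inv_one, one_smul, ← add_assoc] at h
end

section
/- (Double integral of the SO(3) exponential.) For every ω ∈ ℝ³ and every Δ ∈ ℝ, the iterated matrix-valued integral satisfies ∫₀^Δ ( ∫₀^τ exp_m((t ω)^∧) dt ) dτ = Γ₂(Δ ω) · Δ², where integrals of matrix-valued functions are taken entrywise. -/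
/-!
Expanding `exp (t • A) = ∑ tᵏ Aᵏ / k!` entrywise, each entry of the integrand is a scalar power
series whose coefficients `(Aᵏ)ᵢⱼ` grow at most geometrically. Such a series may be integrated
term by term (dominated convergence), and integrating `tᵏ⁺ᵐ / (k+m)!` from `0` to `b` gives
`bᵏ⁺ᵐ⁺¹ / (k+m+1)!`. Doing this twice turns `∑ (Aᵏ)ᵢⱼ tᵏ / k!` into `∑ (Aᵏ)ᵢⱼ Δᵏ⁺² / (k+2)!`,
which is the entry of `Δ² Γ₂(Δ ω)` because `(Δ ω)^∧ = Δ ω^∧`.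
-/

open Matrix

/-- `Γₘ(φ) = Σ_{n=0}^∞ (1/(n+m)!) φ̂ⁿ`. -/
noncomputable def Gamma (m : ℕ) (φ : Fin 3 → ℝ) : Matrix (Fin 3) (Fin 3) ℝ :=
  ∑' n : ℕ, (((n + m).factorial : ℝ))⁻¹ • skew φ ^ n

open Nat

lemma skew_smul (t : ℝ) (ω : Fin 3 → ℝ) : skew (t • ω) = t • skew ω := by
  ext i j
  fin_cases i <;> fin_cases j <;> simp [skew]

lemma Matrix.abs_pow_apply_le {n : Type*} [Fintype n] [DecidableEq n]
    (A : Matrix n n ℝ) (k : ℕ) (i j : n) :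
    |(A ^ k) i j| ≤ (∑ i, ∑ j, |A i j|) ^ k := by
  set K := ∑ i, ∑ j, |A i j|
  induction k generalizing j with
  | zero =>
    rw [pow_zero, pow_zero, Matrix.one_apply]
    split_ifs <;> simp
  | succ k ih =>
    have hcol : ∑ l, |A l j| ≤ K :=
      Finset.sum_le_sum fun l _ =>
        Finset.single_le_sum (f := fun j' => |A l j'|) (fun _ _ => abs_nonneg _)
          (Finset.mem_univ j)
    calc |(A ^ (k + 1)) i j| = |∑ l, (A ^ k) i l * A l j| := by rw [pow_succ, Matrix.mul_apply]
      _ ≤ ∑ l, |(A ^ k) i l| * |A l j| := by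
        simpa only [abs_mul] using Finset.abs_sum_le_sum_abs (fun l => (A ^ k) i l * A l j) _
      _ ≤ ∑ l, K ^ k * |A l j| := by gcongr with l; exact ih l
      _ ≤ K ^ k * K := by
        rw [← Finset.mul_sum]
        exact mul_le_mul_of_nonneg_left hcol (pow_nonneg (by positivity) k)
      _ = K ^ (k + 1) := (pow_succ K k).symm

lemma Matrix.tsum_apply {ι m n R : Type*} [AddCommMonoid R] [TopologicalSpace R] [T2Space R]
    {f : ι → Matrix m n R} (hf : ∀ i j, Summable fun k => f k i j) (i : m) (j : n) :
    (∑' k, f k) i j = ∑' k, f k i j := by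
  have hsum : Summable f := Pi.summable.2 fun i => Pi.summable.2 fun j => hf i j
  exact (Pi.hasSum.1 (Pi.hasSum.1 hsum.hasSum i) j).tsum_eq.symm

section PowerSeries

variable {c : ℕ → ℝ} {K : ℝ}

lemma summable_mul_pow_div_factorial_add (hc : ∀ k, |c k| ≤ K ^ k) (m : ℕ) (t : ℝ) :
    Summable fun k => c k * t ^ k / (k + m)! := by
  refine Summable.of_norm_bounded (Real.summable_pow_div_factorial (K * |t|)) fun k => ?_
  have hfac : (k ! : ℝ) ≤ (k + m)! := by exact_mod_cast factorial_le (le_add_right k m)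
  calc ‖c k * t ^ k / (k + m)!‖ = |c k| * |t| ^ k / (k + m)! := by
        rw [Real.norm_eq_abs, abs_div, abs_mul, abs_pow, Nat.abs_cast]
    _ ≤ K ^ k * |t| ^ k / k ! := by
        have hK : 0 ≤ K ^ k := (abs_nonneg _).trans (hc k)
        gcongr
        exact hc k
    _ = (K * |t|) ^ k / k ! := by rw [mul_pow]

lemma integral_tsum_mul_pow_div_factorial (hc : ∀ k, |c k| ≤ K ^ k) (m : ℕ) (b : ℝ) :
    ∫ t in (0 : ℝ)..b, ∑' k, c k * t ^ (k + m) / (k + m)! =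
      ∑' k, c k * b ^ (k + m + 1) / (k + m + 1)! := by
  have hterm : ∀ k, ∫ t in (0 : ℝ)..b, c k * t ^ (k + m) / (k + m)! =
      c k * b ^ (k + m + 1) / (k + m + 1)! := by
    intro k
    rw [intervalIntegral.integral_div, intervalIntegral.integral_const_mul, integral_pow,
      factorial_succ]
    push_cast
    field_simp
    ring
  have hsum : ∀ {c : ℕ → ℝ}, (∀ k, |c k| ≤ K ^ k) → ∀ t : ℝ,
      Summable fun k => c k * t ^ (k + m) / (k + m)! := fun hc t =>
    ((summable_mul_pow_div_factorial_add hc m t).mul_left (t ^ m)).congr fun k => by ring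
  have habs : ∀ k, |(|c k|)| ≤ K ^ k := fun k => by rw [abs_abs]; exact hc k
  have hdom := intervalIntegral.hasSum_integral_of_dominated_convergence
    (F := fun k t => c k * t ^ (k + m) / (k + m)!) (μ := MeasureTheory.volume) (a := 0) (b := b)
    (fun k _ => |c k| * |b| ^ (k + m) / (k + m)!)
    (fun k => (by fun_prop : Continuous _).aestronglyMeasurable)
    (fun k => MeasureTheory.ae_of_all _ fun t ht => by
      have htb : |t| ≤ |b| := by
        rcases Set.mem_uIcc.1 (Set.uIoc_subset_uIcc ht) with ⟨h0, hb⟩ | ⟨hb, h0⟩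
        · exact abs_le_abs_of_nonneg h0 hb
        · exact abs_le_abs_of_nonpos h0 hb
      rw [Real.norm_eq_abs, abs_div, abs_mul, abs_pow, Nat.abs_cast]
      gcongr)
    (MeasureTheory.ae_of_all _ fun _ _ => by simpa only [abs_pow] using hsum habs |b|)
    intervalIntegrable_const
    (MeasureTheory.ae_of_all _ fun t _ => (hsum hc t).hasSum)
  rw [← hdom.tsum_eq]
  exact tsum_congr hterm

end PowerSeries

lemma Matrix.smul_tsum_inv_factorial_smul_pow_apply {n : Type*} [Fintype n] [DecidableEq n]
    (A : Matrix n n ℝ) (m : ℕ) (t : ℝ) (i j : n) :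
    (t ^ m • ∑' k : ℕ, ((k + m)! : ℝ)⁻¹ • (t • A) ^ k) i j =
      ∑' k, (A ^ k) i j * t ^ (k + m) / (k + m)! := by
  have hentry : ∀ k i j, (((k + m)! : ℝ)⁻¹ • (t • A) ^ k) i j = (A ^ k) i j * t ^ k / (k + m)! :=
    fun k i j => by
      rw [smul_pow, Matrix.smul_apply, Matrix.smul_apply, smul_eq_mul, smul_eq_mul]
      ring
  have hsum : ∀ i j, Summable fun k => (((k + m)! : ℝ)⁻¹ • (t • A) ^ k) i j := fun i j => by
    simpa only [hentry] using summable_mul_pow_div_factorial_add (A.abs_pow_apply_le · i j) m t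
  rw [Matrix.smul_apply, Matrix.tsum_apply hsum, smul_eq_mul, ← tsum_mul_left]
  refine tsum_congr fun k => ?_
  rw [hentry]
  ring

/-- **Double integral of the SO(3) exponential** (entrywise):
`∫₀^Δ ∫₀^τ exp_m((t ω)^∧) dt dτ = Γ₂(Δ ω) Δ²`. -/
theorem double_integral_so3_exp (ω : Fin 3 → ℝ) (Δ : ℝ) (i j : Fin 3) :
    (∫ τ in (0 : ℝ)..Δ, ∫ t in (0 : ℝ)..τ, NormedSpace.exp (skew (t • ω)) i j) =
      ((Δ ^ 2) • Gamma 2 (Δ • ω)) i j := by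
  have hc : ∀ k, |(skew ω ^ k) i j| ≤ _ := fun k => (skew ω).abs_pow_apply_le k i j
  have hexp : ∀ t : ℝ, NormedSpace.exp (skew (t • ω)) i j =
      ∑' k, (skew ω ^ k) i j * t ^ (k + 0) / (k + 0)! := fun t => by
    rw [← (skew ω).smul_tsum_inv_factorial_smul_pow_apply 0 t, skew_smul,
      NormedSpace.exp_eq_tsum ℝ]
    simp
  simp_rw [hexp, integral_tsum_mul_pow_div_factorial hc 0, add_zero,
    integral_tsum_mul_pow_div_factorial hc 1]
  rw [Gamma, skew_smul, Matrix.smul_tsum_inv_factorial_smul_pow_apply]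
end
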